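/- Let p : ℝ^M → ℝ be a smooth positive density and Q : ℝ^M → Matrix (Fin M) (Fin M) ℝ smooth with Q(x) skew-symmetric for all x. Then ∑_{i,j} ∂_i ∂_j ( p(x) Q^{ij}(x) ) = 0 for all x. Consequently, the target density p is stationary under the MCMC dynamics of the complete recipe: with V^i = (1/p) ∑_j ∂_j( p (D^{ij} + Q^{ij}) ) for any smooth symmetric D, one has -∑_i ∂_i(p V^i) + ∑_{i,j} ∂_i ∂_j (p D^{ij}) = 0. -/

import Mathlib

open scoped BigOperators

/-- Partial derivative of `f : ℝ^M → ℝ` in the `i`-th coordinate direction. -/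
noncomputable def pd {M : ℕ} (f : (Fin M → ℝ) → ℝ) (x : Fin M → ℝ) (i : Fin M) : ℝ :=
  fderiv ℝ f x (Pi.single i 1)

lemma contDiff_pd {M : ℕ} {f : (Fin M → ℝ) → ℝ} (hf : ContDiff ℝ (⊤ : ℕ∞) f) (i : Fin M) :
    ContDiff ℝ (⊤ : ℕ∞) (fun x => pd f x i) := by
  have h1 : ContDiff ℝ (⊤ : ℕ∞) (fderiv ℝ f) := hf.fderiv_right (by simp)
  exact (ContinuousLinearMap.apply ℝ ℝ (Pi.single i 1)).contDiff.comp h1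

lemma pd_add {M : ℕ} {f g : (Fin M → ℝ) → ℝ} {x : Fin M → ℝ}
    (hf : DifferentiableAt ℝ f x) (hg : DifferentiableAt ℝ g x) (i : Fin M) :
    pd (fun y => f y + g y) x i = pd f x i + pd g x i := by
  simp [pd, fderiv_fun_add hf hg]

lemma pd_neg {M : ℕ} {f : (Fin M → ℝ) → ℝ} {x : Fin M → ℝ} (i : Fin M) :
    pd (fun y => -(f y)) x i = - pd f x i := by
  simp [pd, fderiv_neg]

lemma pd_sum {M : ℕ} {ι : Type*} (s : Finset ι) {f : ι → (Fin M → ℝ) → ℝ} {x : Fin M → ℝ}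
    (h : ∀ k ∈ s, DifferentiableAt ℝ (f k) x) (i : Fin M) :
    pd (fun y => ∑ k ∈ s, f k y) x i = ∑ k ∈ s, pd (f k) x i := by
  simp [pd, fderiv_fun_sum h]

lemma pd_comm {M : ℕ} {f : (Fin M → ℝ) → ℝ} (hf : ContDiff ℝ (⊤ : ℕ∞) f) (x : Fin M → ℝ) (i j : Fin M) :
    pd (fun y => pd f y j) x i = pd (fun y => pd f y i) x j := by
  have hdiff : Differentiable ℝ f := hf.differentiable (by simp)
  have h1 : ContDiff ℝ (⊤ : ℕ∞) (fderiv ℝ f) := hf.fderiv_right (by simp)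
  have hdx : DifferentiableAt ℝ (fderiv ℝ f) x := (h1.differentiable (by simp)) x
  have key : ∀ v : Fin M → ℝ, fderiv ℝ (fun y => fderiv ℝ f y v) x
      = (fderiv ℝ (fderiv ℝ f) x).flip v := by
    intro v
    have := fderiv_clm_apply (c := fderiv ℝ f) (u := fun _ => v) hdx (differentiableAt_const v)
    simpa using this
  have hsymm : ∀ v w : Fin M → ℝ,
      fderiv ℝ (fderiv ℝ f) x v w = fderiv ℝ (fderiv ℝ f) x w v := by
    intro v w
    exact second_derivative_symmetric (fun y => (hdiff y).hasFDerivAt) hdx.hasFDerivAt v w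
  simp only [pd, key]
  exact hsymm _ _

/-- With `p` a smooth positive density, `Q` smooth skew-symmetric and `D` smooth symmetric:
`∑ᵢⱼ ∂ᵢ∂ⱼ(p Qⁱʲ) = 0`, and consequently `p` is stationary for the complete-recipe dynamics
with drift `Vⁱ = (1/p) ∑ⱼ ∂ⱼ(p (Dⁱʲ + Qⁱʲ))`. -/
theorem recipe_stationarity {M : ℕ}
    (p : (Fin M → ℝ) → ℝ) (hp : ContDiff ℝ (⊤ : ℕ∞) p) (hppos : ∀ x, 0 < p x)
    (D Q : (Fin M → ℝ) → Matrix (Fin M) (Fin M) ℝ)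
    (hDsmooth : ∀ i j, ContDiff ℝ (⊤ : ℕ∞) (fun x => D x i j))
    (hDsymm : ∀ x i j, D x i j = D x j i)
    (hQsmooth : ∀ i j, ContDiff ℝ (⊤ : ℕ∞) (fun x => Q x i j))
    (hQskew : ∀ x i j, Q x i j = - Q x j i) :
    (∀ x : Fin M → ℝ,
      ∑ i, ∑ j, pd (fun y => pd (fun z => p z * Q z i j) y j) x i = 0) ∧
    (∀ x : Fin M → ℝ,
      -∑ i, pd (fun y => p y *
          ((1 / p y) * ∑ j, pd (fun z => p z * (D z i j + Q z i j)) y j)) x i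
        + ∑ i, ∑ j, pd (fun y => pd (fun z => p z * D z i j) y j) x i = 0) := by
  have hPQ : ∀ i j, ContDiff ℝ (⊤ : ℕ∞) (fun z => p z * Q z i j) := fun i j => hp.mul (hQsmooth i j)
  have hPD : ∀ i j, ContDiff ℝ (⊤ : ℕ∞) (fun z => p z * D z i j) := fun i j => hp.mul (hDsmooth i j)
  have part1 : ∀ x : Fin M → ℝ,
      ∑ i, ∑ j, pd (fun y => pd (fun z => p z * Q z i j) y j) x i = 0 := by
    intro x
    have hanti : ∀ i j : Fin M,
        pd (fun y => pd (fun z => p z * Q z i j) y j) x i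
          = - pd (fun y => pd (fun z => p z * Q z j i) y j) x i := by
      intro i j
      have h1 : (fun z => p z * Q z i j) = fun z => -(p z * Q z j i) := by
        funext z; rw [hQskew z i j]; ring
      rw [h1]
      have h2 : (fun y => pd (fun z => -(p z * Q z j i)) y j)
          = fun y => -(pd (fun z => p z * Q z j i) y j) := by
        funext y; exact pd_neg j
      rw [h2]
      exact pd_neg i
    have hanti2 : ∀ i j : Fin M,
        pd (fun y => pd (fun z => p z * Q z i j) y j) x i
          = - pd (fun y => pd (fun z => p z * Q z j i) y i) x j := by
      intro i j
      rw [hanti i j, pd_comm (hPQ j i) x i j]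
    have hdouble :
        (∑ i, ∑ j, pd (fun y => pd (fun z => p z * Q z i j) y j) x i)
          = - ∑ i, ∑ j, pd (fun y => pd (fun z => p z * Q z i j) y j) x i := by
      calc (∑ i, ∑ j, pd (fun y => pd (fun z => p z * Q z i j) y j) x i)
          = ∑ i, ∑ j, -(pd (fun y => pd (fun z => p z * Q z j i) y i) x j) := by
            exact Finset.sum_congr rfl fun i _ => Finset.sum_congr rfl fun j _ => hanti2 i j
        _ = - ∑ i, ∑ j, pd (fun y => pd (fun z => p z * Q z j i) y i) x j := by
            simp [Finset.sum_neg_distrib]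
        _ = - ∑ j, ∑ i, pd (fun y => pd (fun z => p z * Q z j i) y i) x j := by
            rw [Finset.sum_comm]
        _ = - ∑ i, ∑ j, pd (fun y => pd (fun z => p z * Q z i j) y j) x i := rfl
    linarith
  refine ⟨part1, ?_⟩
  intro x
  have hsimp : ∀ i : Fin M, (fun y => p y *
        ((1 / p y) * ∑ j, pd (fun z => p z * (D z i j + Q z i j)) y j))
      = fun y => ∑ j, pd (fun z => p z * (D z i j + Q z i j)) y j := by
    intro i; funext y
    field_simp
    rw [mul_comm, mul_div_assoc, div_self (hppos y).ne', mul_one]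
  have hPDQ : ∀ i j, ContDiff ℝ (⊤ : ℕ∞) (fun z => p z * (D z i j + Q z i j)) :=
    fun i j => hp.mul ((hDsmooth i j).add (hQsmooth i j))
  have hsplit : ∀ (i j : Fin M) (y : Fin M → ℝ),
      pd (fun z => p z * (D z i j + Q z i j)) y j
        = pd (fun z => p z * D z i j) y j + pd (fun z => p z * Q z i j) y j := by
    intro i j y
    have h : (fun z => p z * (D z i j + Q z i j))
        = fun z => p z * D z i j + p z * Q z i j := by funext z; ring
    rw [h, pd_add (((hPD i j).differentiable (by simp)) y) (((hPQ i j).differentiable (by simp)) y)]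
  have hmain : ∀ i : Fin M,
      pd (fun y => ∑ j, pd (fun z => p z * (D z i j + Q z i j)) y j) x i
        = ∑ j, (pd (fun y => pd (fun z => p z * D z i j) y j) x i
              + pd (fun y => pd (fun z => p z * Q z i j) y j) x i) := by
    intro i
    rw [pd_sum Finset.univ
      (fun j _ => ((contDiff_pd (hPDQ i j) j).differentiable (by simp)) x) i]
    refine Finset.sum_congr rfl fun j _ => ?_
    have h : (fun y => pd (fun z => p z * (D z i j + Q z i j)) y j)
        = fun y => pd (fun z => p z * D z i j) y j + pd (fun z => p z * Q z i j) y j := by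
      funext y; exact hsplit i j y
    rw [h, pd_add (((contDiff_pd (hPD i j) j).differentiable (by simp)) x)
      (((contDiff_pd (hPQ i j) j).differentiable (by simp)) x)]
  simp only [hsimp, hmain, Finset.sum_add_distrib]
  have := part1 x
  linarith
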